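/- M_n^k equals a constant multiple of the CK extension of \underline x^n P_k(\underline x): M_n^k(x) = (n!/∏_{s=0}^{n}β_k(s)) · CK[\underline x^n P_k(\underline x)](x) for all n ≥ 0. -/

import Mathlib

open Finset

variable {m : ℕ} {A : Type*} [NormedRing A] [NormedAlgebra ℝ A]

/-- The Dirac operator ∂_{\underline x} = Σ_j e_j ∂_{x_j} on A-valued functions on ℝ^m,
where `e : Fin m → A` are the Clifford generators acting by left multiplication. -/
noncomputable def Dirac (e : Fin m → A) (f : EuclideanSpace ℝ (Fin m) → A)
    (x : EuclideanSpace ℝ (Fin m)) : A :=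
  ∑ j, e j * fderiv ℝ f x (EuclideanSpace.single j 1)

/-- The generalized Cauchy–Riemann operator ∂_x = ∂_{x_0} + Σ_j e_j ∂_{x_j}
on A-valued functions on ℝ^{m+1} = ℝ × ℝ^m. -/
noncomputable def CR (e : Fin m → A) (f : ℝ × EuclideanSpace ℝ (Fin m) → A)
    (p : ℝ × EuclideanSpace ℝ (Fin m)) : A :=
  fderiv ℝ f p (1, 0) + ∑ j, e j * fderiv ℝ f p (0, EuclideanSpace.single j 1)

/-- The conjugate Cauchy–Riemann operator \overline∂_x = ∂_{x_0} − Σ_j e_j ∂_{x_j}. -/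
noncomputable def CRbar (e : Fin m → A) (f : ℝ × EuclideanSpace ℝ (Fin m) → A)
    (p : ℝ × EuclideanSpace ℝ (Fin m)) : A :=
  fderiv ℝ f p (1, 0) - ∑ j, e j * fderiv ℝ f p (0, EuclideanSpace.single j 1)

/-- The Laplacian Δ = Σ_{j=0}^m ∂_{x_j}² on ℝ^{m+1} = ℝ × ℝ^m. -/
noncomputable def Lap (f : ℝ × EuclideanSpace ℝ (Fin m) → A)
    (p : ℝ × EuclideanSpace ℝ (Fin m)) : A :=
  fderiv ℝ (fun q => fderiv ℝ f q (1, 0)) p (1, 0) +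
    ∑ j, fderiv ℝ (fun q => fderiv ℝ f q (0, EuclideanSpace.single j 1)) p
      (0, EuclideanSpace.single j 1)

/-- The Clifford vector \underline x = Σ_j x_j e_j associated to x ∈ ℝ^m. -/
noncomputable def vec (e : Fin m → A) (x : EuclideanSpace ℝ (Fin m)) : A :=
  ∑ j, x j • e j

/-- g : ℝ^m → A is a polynomial map of degree at most d. -/
def IsPolyDeg (d : ℕ) (g : EuclideanSpace ℝ (Fin m) → A) : Prop :=
  ∃ (S : Finset (Fin m →₀ ℕ)) (c : (Fin m →₀ ℕ) → A),
    (∀ α ∈ S, (α.sum fun _ n => n) ≤ d) ∧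
    ∀ x, g x = ∑ α ∈ S, (∏ j, x j ^ α j) • c α

/-- The Cauchy–Kovalevskaya extension CK[g](x_0,\underline x)
= Σ_{j≥0} ((−x_0)^j/j!) ∂_{\underline x}^j g(\underline x). -/
noncomputable def CK (e : Fin m → A) (g : EuclideanSpace ℝ (Fin m) → A)
    (p : ℝ × EuclideanSpace ℝ (Fin m)) : A :=
  ∑' j : ℕ, (((-p.1) ^ j / j.factorial : ℝ)) • (Dirac e)^[j] g p.2

/-- β_k(0)=1, β_k(s)=s for even s ≥ 1, β_k(s)=2k+m+s−1 for odd s. -/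
noncomputable def betak (m k : ℕ) (n : ℕ) : ℝ :=
  if n = 0 then 1 else if Even n then (n : ℝ) else (2 * k + m + n - 1 : ℝ)

/-- C_{k,n}(j) = (n−j)! / ∏_{s=0}^{n−j} β_k(s). -/
noncomputable def Ckn (m k n j : ℕ) : ℝ :=
  ((n - j).factorial : ℝ) / ∏ s ∈ Finset.range (n - j + 1), betak m k s

/-- M_n^k(x) = (Σ_{j=0}^{n} C(n,j) C_{k,n}(j) x_0^j \underline x^{n−j}) P_k(\underline x). -/
noncomputable def Mnk (e : Fin m → A) (k : ℕ) (P : EuclideanSpace ℝ (Fin m) → A)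
    (n : ℕ) (p : ℝ × EuclideanSpace ℝ (Fin m)) : A :=
  (∑ j ∈ Finset.range (n + 1),
    ((n.choose j : ℝ) * Ckn m k n j) • (p.1 ^ j • vec e p.2 ^ (n - j))) * P p.2

/-! For `f` homogeneous of degree `d`, the Clifford relations
`e_j x = -x e_j - 2 x_j` and Euler's identity give `∂(x f) = -x ∂f - (2d + m) f`. As `P` is
monogenic, induction on `s` turns this into `∂(x^(s+1) P) = -β_k(s+1) x^s P`, because
`β_k(s+1) + β_k(s+2) = 2(s+1+k) + m`. Hence `∂^j (x^n P) = ∏_{i<j} (-β_k(n-i)) x^(n-j) P`, which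
vanishes for `j > n`, so the CK series is a finite sum; matching it with `M_n^k` termwise uses
`C(n,j) j! (n-j)! = n!` and `∏_{s≤n} β_k(s) = ∏_{s≤n-j} β_k(s) · ∏_{i<j} β_k(n-i)`. -/

noncomputable def vecCLM (e : Fin m → A) : EuclideanSpace ℝ (Fin m) →L[ℝ] A :=
  ∑ j, (EuclideanSpace.proj j : EuclideanSpace ℝ (Fin m) →L[ℝ] ℝ).smulRight (e j)

@[simp]
lemma coe_vecCLM (e : Fin m → A) : ⇑(vecCLM e) = vec e := by
  funext y
  simp [vecCLM, vec]

lemma hasFDerivAt_vec (e : Fin m → A) (x : EuclideanSpace ℝ (Fin m)) :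
    HasFDerivAt (vec e) (vecCLM e) x := by
  simpa using (vecCLM e).hasFDerivAt

lemma differentiable_vec (e : Fin m → A) : Differentiable ℝ (vec e) :=
  fun x => (hasFDerivAt_vec e x).differentiableAt

lemma vec_smul (e : Fin m → A) (t : ℝ) (y : EuclideanSpace ℝ (Fin m)) :
    vec e (t • y) = t • vec e y := by
  rw [← coe_vecCLM, map_smul]

lemma vec_single (e : Fin m → A) (j : Fin m) : vec e (EuclideanSpace.single j 1) = e j := by
  simp [vec]

lemma IsPolyDeg.differentiable {d : ℕ} {g : EuclideanSpace ℝ (Fin m) → A} (hg : IsPolyDeg d g) :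
    Differentiable ℝ g := by
  obtain ⟨S, c, -, hrep⟩ := hg
  rw [funext hrep]
  fun_prop

lemma generator_mul_vec {e : Fin m → A} (he : ∀ j, e j * e j = -1)
    (hanti : ∀ i j, i ≠ j → e i * e j = -(e j * e i)) (y : EuclideanSpace ℝ (Fin m)) (j : Fin m) :
    e j * vec e y = -(vec e y * e j) - (2 * y j) • (1 : A) := by
  have hterm : ∀ i, e j * (y i • e i)
      = -((y i • e i) * e j) - if j = i then (2 * y j) • (1 : A) else 0 := by
    intro i
    rcases eq_or_ne j i with rfl | hji
    · simp only [mul_smul_comm, smul_mul_assoc, he, if_true]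
      module
    · simp [hji, hanti j i hji]
  simp only [vec, mul_sum, sum_mul, hterm, sum_sub_distrib,
    sum_neg_distrib, sum_ite_eq, mem_univ, if_true]

lemma sum_smul_apply_single {F G : Type*} [AddCommGroup F] [Module ℝ F]
    [FunLike G (EuclideanSpace ℝ (Fin m)) F] [LinearMapClass G ℝ (EuclideanSpace ℝ (Fin m)) F]
    (L : G) (x : EuclideanSpace ℝ (Fin m)) :
    ∑ j, x j • L (EuclideanSpace.single j 1) = L x := by
  simp_rw [← map_smul, ← map_sum]
  congr 1
  ext i
  simp [Pi.single_apply]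

theorem fderiv_apply_self_of_homogeneous {E F : Type*} [NormedAddCommGroup E] [NormedSpace ℝ E]
    [NormedAddCommGroup F] [NormedSpace ℝ F] {f : E → F} {d : ℕ}
    (hf : ∀ (t : ℝ) x, f (t • x) = t ^ d • f x) {x : E} (hx : DifferentiableAt ℝ f x) :
    fderiv ℝ f x x = (d : ℝ) • f x := by
  have hray : HasDerivAt (fun t : ℝ => f (t • x)) (fderiv ℝ f x x) 1 := by
    have hline : HasDerivAt (fun t : ℝ => t • x) x 1 := by
      simpa using (hasDerivAt_id (1 : ℝ)).smul_const x
    have hfx : HasFDerivAt f (fderiv ℝ f x) ((1 : ℝ) • x) := by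
      rw [one_smul]; exact hx.hasFDerivAt
    exact hfx.comp_hasDerivAt 1 hline
  have hpow : HasDerivAt (fun t : ℝ => f (t • x)) ((d : ℝ) • f x) 1 := by
    simp_rw [hf]
    simpa using (hasDerivAt_pow d (1 : ℝ)).smul_const (f x)
  exact hray.unique hpow

lemma dirac_const_smul (e : Fin m → A) (c : ℝ) (f : EuclideanSpace ℝ (Fin m) → A) :
    Dirac e (fun y => c • f y) = fun x => c • Dirac e f x := by
  funext x
  have hc : fderiv ℝ (c • f) x = c • fderiv ℝ f x := by rw [fderiv_const_smul_field]; rfl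
  simp only [Dirac, smul_sum, ← mul_smul_comm]
  exact sum_congr rfl fun j _ => by rw [← smul_apply, ← hc]; rfl

lemma dirac_zero (e : Fin m → A) : Dirac e 0 = 0 := by
  funext x
  simp [Dirac]

lemma dirac_vec_mul {e : Fin m → A} (he : ∀ j, e j * e j = -1)
    (hanti : ∀ i j, i ≠ j → e i * e j = -(e j * e i)) {f : EuclideanSpace ℝ (Fin m) → A}
    {x : EuclideanSpace ℝ (Fin m)} (hf : DifferentiableAt ℝ f x) :
    Dirac e (fun y => vec e y * f y) x
      = -(vec e x * Dirac e f x) - (2 : ℝ) • fderiv ℝ f x x - (m : ℝ) • f x := by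
  have hterm : ∀ j, e j * (vec e x * fderiv ℝ f x (EuclideanSpace.single j 1) + e j * f x)
      = -(vec e x * (e j * fderiv ℝ f x (EuclideanSpace.single j 1)))
        - (2 : ℝ) • (x j • fderiv ℝ f x (EuclideanSpace.single j 1)) - f x := by
    intro j
    rw [mul_add, ← mul_assoc, ← mul_assoc, generator_mul_vec he hanti, he]
    simp only [sub_mul, neg_mul, one_mul, smul_mul_assoc, mul_assoc, smul_smul, ← sub_eq_add_neg]
  rw [Dirac, ((hasFDerivAt_vec e x).fun_mul' hf.hasFDerivAt).fderiv]
  simp only [add_apply, smul_apply, smul_eq_mul, coe_vecCLM, vec_single, op_smul_eq_mul, hterm,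
    sum_sub_distrib, sum_neg_distrib, ← mul_sum, ← smul_sum]
  rw [sum_smul_apply_single, sum_const, card_univ, Fintype.card_fin,
    ← Nat.cast_smul_eq_nsmul ℝ, Dirac]

lemma dirac_vec_mul_of_homogeneous {e : Fin m → A} (he : ∀ j, e j * e j = -1)
    (hanti : ∀ i j, i ≠ j → e i * e j = -(e j * e i)) {f : EuclideanSpace ℝ (Fin m) → A}
    {d : ℕ} (hf : Differentiable ℝ f) (hhom : ∀ (t : ℝ) y, f (t • y) = t ^ d • f y)
    (x : EuclideanSpace ℝ (Fin m)) :
    Dirac e (fun y => vec e y * f y) x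
      = -(vec e x * Dirac e f x) - (2 * d + m : ℝ) • f x := by
  rw [dirac_vec_mul he hanti (hf x), fderiv_apply_self_of_homogeneous hhom (hf x)]
  module

lemma vec_pow_mul_apply_smul (e : Fin m → A) {P : EuclideanSpace ℝ (Fin m) → A} {k : ℕ}
    (hhom : ∀ (t : ℝ) y, P (t • y) = t ^ k • P y) (s : ℕ) (t : ℝ) (y : EuclideanSpace ℝ (Fin m)) :
    vec e (t • y) ^ s * P (t • y) = t ^ (s + k) • (vec e y ^ s * P y) := by
  rw [vec_smul, hhom, smul_pow, smul_mul_smul_comm, pow_add]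

lemma betak_succ_add_betak_succ_succ (m k s : ℕ) :
    betak m k (s + 1) + betak m k (s + 2) = 2 * (s + 1 + k : ℕ) + m := by
  rcases Nat.even_or_odd s with hs | hs
  · have h1 : ¬ Even (s + 1) := by simpa [Nat.even_add_one] using hs
    have h2 : Even (s + 2) := by simpa [Nat.even_add] using hs
    simp only [betak, h1, h2, if_false, if_true, Nat.add_eq_zero_iff, one_ne_zero, and_false,
      OfNat.ofNat_ne_zero]
    push_cast; ring
  · have h1 : Even (s + 1) := hs.add_one
    have h2 : ¬ Even (s + 2) := by simpa [Nat.even_add, Nat.not_even_iff_odd] using hs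
    simp only [betak, h1, h2, if_false, if_true, Nat.add_eq_zero_iff, one_ne_zero, and_false,
      OfNat.ofNat_ne_zero]
    push_cast; ring

lemma dirac_vec_pow_succ_mul {e : Fin m → A} (he : ∀ j, e j * e j = -1)
    (hanti : ∀ i j, i ≠ j → e i * e j = -(e j * e i)) {k : ℕ} {P : EuclideanSpace ℝ (Fin m) → A}
    (hP : Differentiable ℝ P) (hhom : ∀ (t : ℝ) y, P (t • y) = t ^ k • P y)
    (hmono : ∀ x, Dirac e P x = 0) (s : ℕ) :
    Dirac e (fun y => vec e y ^ (s + 1) * P y)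
      = fun x => -betak m k (s + 1) • (vec e x ^ s * P x) := by
  induction s with
  | zero =>
    funext x
    simp only [zero_add, pow_one, pow_zero, one_mul]
    rw [dirac_vec_mul_of_homogeneous he hanti hP hhom, hmono, betak]
    simp only [one_ne_zero, if_false, Nat.not_even_one, mul_zero, neg_zero, zero_sub,
      Nat.cast_one, add_sub_cancel_right, neg_smul]
  | succ s ih =>
    funext x
    have hf : Differentiable ℝ (fun y => vec e y ^ (s + 1) * P y) :=
      ((differentiable_vec e).pow _).mul hP
    simp only [pow_succ' (vec e _) (s + 1), mul_assoc]
    rw [dirac_vec_mul_of_homogeneous he hanti hf (vec_pow_mul_apply_smul e hhom (s + 1)), ih,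
      mul_smul_comm, ← mul_assoc, ← pow_succ']
    linear_combination (norm := module)
      betak_succ_add_betak_succ_succ m k s • (vec e x ^ (s + 1) * P x)

lemma iterate_dirac_vec_pow_mul {e : Fin m → A} (he : ∀ j, e j * e j = -1)
    (hanti : ∀ i j, i ≠ j → e i * e j = -(e j * e i)) {k : ℕ} {P : EuclideanSpace ℝ (Fin m) → A}
    (hP : Differentiable ℝ P) (hhom : ∀ (t : ℝ) y, P (t • y) = t ^ k • P y)
    (hmono : ∀ x, Dirac e P x = 0) {n j : ℕ} (hj : j ≤ n) :
    (Dirac e)^[j] (fun y => vec e y ^ n * P y)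
      = fun y => (∏ i ∈ range j, -betak m k (n - i)) • (vec e y ^ (n - j) * P y) := by
  induction j with
  | zero => simp
  | succ j ih =>
    obtain ⟨s, hs⟩ : ∃ s, n - j = s + 1 := ⟨n - j - 1, by omega⟩
    rw [Function.iterate_succ_apply', ih (by omega), dirac_const_smul, hs,
      dirac_vec_pow_succ_mul he hanti hP hhom hmono s, ← hs, prod_range_succ,
      show n - (j + 1) = s by omega]
    funext y
    rw [smul_smul, mul_comm]

lemma iterate_dirac_vec_pow_mul_of_lt {e : Fin m → A} (he : ∀ j, e j * e j = -1)
    (hanti : ∀ i j, i ≠ j → e i * e j = -(e j * e i)) {k : ℕ} {P : EuclideanSpace ℝ (Fin m) → A}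
    (hP : Differentiable ℝ P) (hhom : ∀ (t : ℝ) y, P (t • y) = t ^ k • P y)
    (hmono : ∀ x, Dirac e P x = 0) {n j : ℕ} (hj : n < j) :
    (Dirac e)^[j] (fun y => vec e y ^ n * P y) = 0 := by
  obtain ⟨i, rfl⟩ := Nat.exists_eq_add_of_lt hj
  have hlast : Dirac e ((Dirac e)^[n] (fun y => vec e y ^ n * P y)) = 0 := by
    simp only [iterate_dirac_vec_pow_mul he hanti hP hhom hmono le_rfl, Nat.sub_self, pow_zero,
      one_mul, dirac_const_smul, hmono, smul_zero]
    rfl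
  rw [show n + i + 1 = i + (1 + n) by ring, Function.iterate_add_apply, Function.iterate_add_apply,
    Function.iterate_one, hlast, Function.iterate_fixed (dirac_zero e)]

lemma prod_range_succ_eq_prod_mul_prod_sub {M : Type*} [CommMonoid M] (f : ℕ → M) {n j : ℕ}
    (hj : j ≤ n) :
    ∏ s ∈ range (n + 1), f s = (∏ s ∈ range (n - j + 1), f s) * ∏ i ∈ range j, f (n - i) := by
  rw [show n + 1 = (n - j + 1) + j by omega, prod_range_add,
    ← prod_range_reflect (fun i => f (n - i)) j]
  congr 1
  exact prod_congr rfl fun i hi => by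
    rw [mem_range] at hi
    congr 1
    omega

lemma betak_pos {m k : ℕ} (hkm : 1 ≤ 2 * k + m) (s : ℕ) : 0 < betak m k s := by
  unfold betak
  split_ifs with h0
  · exact one_pos
  · exact_mod_cast Nat.pos_of_ne_zero h0
  · have : (1 : ℝ) ≤ 2 * k + m := by exact_mod_cast hkm
    have : (1 : ℝ) ≤ s := by exact_mod_cast Nat.one_le_iff_ne_zero.mpr h0
    linarith

lemma choose_mul_Ckn_mul_pow {m k n j : ℕ} (hkm : 1 ≤ 2 * k + m) (hj : j ≤ n) (x₀ : ℝ) :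
    (n.choose j * Ckn m k n j) * x₀ ^ j
      = (n.factorial / ∏ s ∈ range (n + 1), betak m k s)
          * ((-x₀) ^ j / j.factorial * ∏ i ∈ range j, -betak m k (n - i)) := by
  have hfact : (n.choose j : ℝ) * j.factorial * (n - j).factorial = n.factorial := by
    exact_mod_cast Nat.choose_mul_factorial_mul_factorial hj
  have hsign : ((-1 : ℝ)) ^ j * (-1) ^ j = 1 := by rw [← mul_pow]; norm_num
  have h₁ : ∏ s ∈ range (n - j + 1), betak m k s ≠ 0 :=
    (prod_pos fun s _ => betak_pos hkm s).ne'
  have h₂ : ∏ i ∈ range j, betak m k (n - i) ≠ 0 := (prod_pos fun i _ => betak_pos hkm _).ne'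
  rw [Ckn, prod_range_succ_eq_prod_mul_prod_sub _ hj, prod_neg, card_range, neg_pow, ← hfact]
  field_simp
  linear_combination -((n.choose j : ℝ) * x₀ ^ j) * hsign

/-- M_n^k(x) = (n!/∏_{s=0}^{n}β_k(s)) · CK[\underline x^n P_k](x). -/
theorem stmt15 (e : Fin m → A)
    (he : ∀ j, e j * e j = -1)
    (hanti : ∀ j k, j ≠ k → e j * e k = -(e k * e j))
    (k : ℕ) (hkm : 1 ≤ 2 * k + m)
    (P : EuclideanSpace ℝ (Fin m) → A)
    (hPpoly : IsPolyDeg k P)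
    (hhom : ∀ (t : ℝ) (x : EuclideanSpace ℝ (Fin m)), P (t • x) = t ^ k • P x)
    (hmono : ∀ x, Dirac e P x = 0) :
    ∀ (n : ℕ) p,
      Mnk e k P n p =
        ((n.factorial : ℝ) / ∏ s ∈ Finset.range (n + 1), betak m k s) •
          CK e (fun y => vec e y ^ n * P y) p := by
  have hP := hPpoly.differentiable
  intro n ⟨x₀, x⟩
  have hvanish : ∀ j ∉ range (n + 1), ((-x₀) ^ j / j.factorial : ℝ) •
      (Dirac e)^[j] (fun y => vec e y ^ n * P y) x = 0 := fun j hj => by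
    rw [iterate_dirac_vec_pow_mul_of_lt he hanti hP hhom hmono (by simpa using hj),
      Pi.zero_apply, smul_zero]
  rw [CK, tsum_eq_sum hvanish, smul_sum, Mnk, sum_mul]
  refine sum_congr rfl fun j hj => ?_
  have hjn : j ≤ n := Nat.lt_succ_iff.mp (mem_range.mp hj)
  rw [iterate_dirac_vec_pow_mul he hanti hP hhom hmono hjn, smul_mul_assoc, smul_mul_assoc,
    smul_smul, smul_smul, smul_smul, choose_mul_Ckn_mul_pow hkm hjn, mul_assoc]
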